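/- arXiv:1502.06065 — 3 statements merged into one kernel-verified Lean document; each statement's English description precedes it below -/
import Mathlib

section
/- Let c₁ ≥ 0 and c₂ > 0 be real numbers, and let (λ_n)_{n≥1} be a sequence of real numbers with 0 ≤ λ_n ≤ c₁·exp(−c₂·√n) for every n ≥ 1. Then for every integer N ≥ 1 the tail series ∑_{n=N+1}^∞ λ_n converges and ∑_{n=N+1}^∞ λ_n ≤ (2c₁/c₂²)·(1 + c₂·√N)·exp(−c₂·√N). -/
/-!
The tail is compared with an integral: `t ↦ exp (-c √t)` is antitone, so
`∑_{n=N+1}^{N+M} exp (-c √n) ≤ ∫_N^∞ exp (-c √t) dt`, and the substitution `t = s²` gives the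
closed form `∫_x^∞ exp (-c √t) dt = (2 / c²) (1 + c √x) exp (-c √x)`.
-/

open Real Set Finset

noncomputable def expNegSqrtTail (c x : ℝ) : ℝ :=
  2 / c ^ 2 * (1 + c * √x) * exp (-c * √x)

lemma expNegSqrtTail_nonneg {c : ℝ} (hc : 0 < c) (x : ℝ) : 0 ≤ expNegSqrtTail c x := by
  unfold expNegSqrtTail
  positivity

lemma continuous_expNegSqrtTail (c : ℝ) : Continuous (expNegSqrtTail c) := by
  unfold expNegSqrtTail
  fun_prop

lemma hasDerivAt_expNegSqrtTail {c x : ℝ} (hc : c ≠ 0) (hx : 0 < x) :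
    HasDerivAt (expNegSqrtTail c) (-exp (-c * √x)) x := by
  have hsqrt := hasDerivAt_sqrt hx.ne'
  have h := ((((hsqrt.const_mul c).const_add 1).const_mul (2 / c ^ 2)).mul
    (hsqrt.const_mul (-c)).exp)
  refine h.congr_deriv ?_
  have : √x ≠ 0 := (sqrt_pos.mpr hx).ne'
  field_simp
  ring

lemma integral_exp_neg_mul_sqrt {c a b : ℝ} (hc : c ≠ 0) (ha : 0 ≤ a) (hab : a ≤ b) :
    ∫ t in a..b, exp (-c * √t) = expNegSqrtTail c a - expNegSqrtTail c b := by
  have h := intervalIntegral.integral_eq_sub_of_hasDerivAt_of_le hab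
    (continuous_expNegSqrtTail c).continuousOn
    (fun x hx => hasDerivAt_expNegSqrtTail hc (ha.trans_lt hx.1))
    ((by fun_prop : Continuous fun t => -exp (-c * √t)).intervalIntegrable _ _)
  rw [intervalIntegral.integral_neg] at h
  linarith

lemma antitone_exp_neg_mul_sqrt {c : ℝ} (hc : 0 ≤ c) : Antitone fun t => exp (-c * √t) :=
  fun _ _ hst => exp_le_exp.mpr <| by nlinarith [sqrt_le_sqrt hst]

lemma sum_exp_neg_mul_sqrt_le {c x : ℝ} (hc : 0 < c) (hx : 0 ≤ x) (M : ℕ) :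
    ∑ i ∈ range M, exp (-c * √(x + ↑(i + 1))) ≤ expNegSqrtTail c x :=
  calc ∑ i ∈ range M, exp (-c * √(x + ↑(i + 1)))
      ≤ ∫ t in x..x + M, exp (-c * √t) :=
        ((antitone_exp_neg_mul_sqrt hc.le).antitoneOn _).sum_le_integral
    _ = expNegSqrtTail c x - expNegSqrtTail c (x + M) :=
        integral_exp_neg_mul_sqrt hc.ne' hx (by simp)
    _ ≤ expNegSqrtTail c x := sub_le_self _ (expNegSqrtTail_nonneg hc _)

/-- Lemma 3.2(i) summation estimate: if `0 ≤ λ n ≤ c₁ exp (-c₂ √n)` for all `n ≥ 1`,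
then for every `N ≥ 1` the tail series `∑_{n=N+1}^∞ λ n` converges and is bounded by
`(2c₁/c₂²)(1 + c₂ √N) exp (-c₂ √N)`. -/
theorem stmt0 (c₁ c₂ : ℝ) (hc₁ : 0 ≤ c₁) (hc₂ : 0 < c₂) (lam : ℕ → ℝ)
    (hlam : ∀ n : ℕ, 1 ≤ n →
      0 ≤ lam n ∧ lam n ≤ c₁ * Real.exp (-c₂ * Real.sqrt n)) :
    ∀ N : ℕ, 1 ≤ N →
      Summable (fun n : ℕ => lam (n + (N + 1))) ∧
      ∑' n : ℕ, lam (n + (N + 1)) ≤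
        (2 * c₁ / c₂ ^ 2) * (1 + c₂ * Real.sqrt N) * Real.exp (-c₂ * Real.sqrt N) := by
  intro N _
  have hlam_tail (n : ℕ) := hlam (n + (N + 1)) (by omega)
  have hpartial (M : ℕ) :
      ∑ n ∈ range M, lam (n + (N + 1)) ≤ c₁ * expNegSqrtTail c₂ N :=
    calc ∑ n ∈ range M, lam (n + (N + 1))
        ≤ c₁ * ∑ n ∈ range M, exp (-c₂ * √((N : ℝ) + ↑(n + 1))) := by
          rw [mul_sum]
          gcongr with n
          refine (hlam_tail n).2.trans_eq ?_
          push_cast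
          ring_nf
      _ ≤ c₁ * expNegSqrtTail c₂ N := by
          gcongr
          exact sum_exp_neg_mul_sqrt_le hc₂ N.cast_nonneg M
  have hsum := summable_of_sum_range_le (fun n => (hlam_tail n).1) hpartial
  refine ⟨hsum, (hsum.tsum_le_of_sum_range_le hpartial).trans_eq ?_⟩
  unfold expNegSqrtTail
  ring
end

section
/- Let B be a complex Banach space, let L = [a₀, b₀] ⊂ ℝ be a compact interval of positive length |L| = b₀ − a₀ > 0 (regarded as a subset of ℂ), let d > 0, and set Ξ(L; d) := {z ∈ ℂ : dist(z, L) ≤ d} and ϱ := 2d/|L| + √(1 + 4d²/|L|²) (so ϱ > 1). Suppose v : ℂ → B is complex-analytic on an open set containing Ξ(L; d). Then for every natural number p there exist elements b₀, b₁, …, b_p ∈ B such that sup_{y ∈ L} ‖v(y) − ∑_{s=0}^{p} y^s · b_s‖ ≤ (2/(ϱ − 1)) · ϱ^{−p} · sup_{z ∈ Ξ(L; d)} ‖v(z)‖. -/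
/-!
Let `c`, `r` be the midpoint and half-length of `L` and `J w = (w + w⁻¹) / 2`. On the annulus
`A = {ϱ⁻¹ ≤ ‖w‖ ≤ ϱ}` one has `‖J w - Re (w / ‖w‖)‖ ≤ (ϱ - ϱ⁻¹) / 2 = d / r`, so `c + r • J(A)`
lies in `Ξ(L; d)` and `F w = v (c + r * J w)` is holomorphic near `A`. Cauchy's formula on `A`,
with both Cauchy kernels expanded as truncated geometric series, approximates `F` on the unit
circle by a Laurent polynomial to within `2 ϱ^{-p} max ‖v‖ / (ϱ - 1)`. Since `F u = F u⁻¹`,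
averaging the approximations at `u` and `u⁻¹` replaces each `u ^ k` by
`(u ^ k + u⁻¹ ^ k) / 2 = T_k (J u)`, a polynomial of degree `k` in `J u`, and `J u` sweeps
`[-1, 1]` as `u` runs over the unit circle.
-/

open Complex Metric Set Finset Polynomial
open scoped Real ComplexConjugate

section PolynomialMaps

variable (R M : Type*) [CommSemiring R] [AddCommMonoid M] [Module R M]

def polynomialMapsLE (p : ℕ) : Submodule R (R → M) where
  carrier := {f | ∃ coef : ℕ → M, ∀ y, f y = ∑ s ∈ range (p + 1), y ^ s • coef s}
  add_mem' := by
    rintro f g ⟨a, ha⟩ ⟨b, hb⟩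
    exact ⟨a + b, fun y => by simp only [Pi.add_apply, ha, hb, smul_add, sum_add_distrib]⟩
  zero_mem' := ⟨0, by simp⟩
  smul_mem' := by
    rintro c f ⟨a, ha⟩
    exact ⟨c • a, fun y => by simp only [Pi.smul_apply, ha, smul_sum, smul_comm c]⟩

variable {R M}

theorem sum_eval_smul_mem_polynomialMapsLE {ι : Type*} {p : ℕ} {s : Finset ι} {P : ι → R[X]}
    (hP : ∀ i ∈ s, (P i).natDegree ≤ p) (e : ι → M) :
    (fun y => ∑ i ∈ s, (P i).eval y • e i) ∈ polynomialMapsLE R M p := by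
  have hmem : ∀ i ∈ s, (fun y => (P i).eval y • e i) ∈ polynomialMapsLE R M p := fun i hi =>
    ⟨fun k => (P i).coeff k • e i, fun y => by
      simp only [eval_eq_sum_range' (Nat.lt_succ_of_le (hP i hi)), sum_smul, smul_smul, mul_comm]⟩
  simpa only [← Finset.sum_fn] using Submodule.sum_mem _ hmem

theorem comp_affine_mem_polynomialMapsLE {p : ℕ} {f : R → M} (hf : f ∈ polynomialMapsLE R M p)
    (α β : R) : (fun y => f (α * y + β)) ∈ polynomialMapsLE R M p := by
  obtain ⟨coef, hcoef⟩ := hf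
  have := sum_eval_smul_mem_polynomialMapsLE (s := range (p + 1))
    (P := fun s => (C α * X + C β) ^ s)
    (fun s hs => (natDegree_pow_le_of_le s natDegree_linear_le).trans
      (by simpa [Nat.lt_succ_iff] using hs)) coef
  simpa [hcoef] using this

end PolynomialMaps

theorem Polynomial.Chebyshev.two_mul_T_eval_half_add {K : Type*} [Field K] [NeZero (2 : K)]
    {x y : K} (h : x * y = 1) (n : ℕ) :
    2 * (T K n).eval ((x + y) / 2) = x ^ n + y ^ n := by
  let : Invertible (2 : K) := invertibleOfNonzero two_ne_zero
  rw [chebyshev_T_eq_dickson_one_one, eval_mul, eval_C, eval_comp, eval_mul, eval_X, eval_ofNat,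
    mul_div_cancel₀ _ two_ne_zero, dickson_one_one_eval_add_inv x y h, ← mul_assoc,
    mul_invOf_self, one_mul]

section Joukowski

noncomputable def joukowski (w : ℂ) : ℂ := (w + w⁻¹) / 2

theorem joukowski_inv (w : ℂ) : joukowski w⁻¹ = joukowski w := by
  rw [joukowski, joukowski, inv_inv, add_comm]

theorem differentiableOn_joukowski : DifferentiableOn ℂ joukowski {w | w ≠ 0} :=
  (differentiableOn_id.add (differentiableOn_id.inv fun _ hw => hw)).div_const 2

theorem exists_norm_eq_one_joukowski_eq {t : ℝ} (ht : t ∈ Icc (-1 : ℝ) 1) :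
    ∃ u : ℂ, ‖u‖ = 1 ∧ joukowski u = t := by
  refine ⟨exp (Real.arccos t * I), norm_exp_ofReal_mul_I _, ?_⟩
  rw [joukowski, ← exp_neg, ← neg_mul, ← cos, ← ofReal_cos, Real.cos_arccos ht.1 ht.2]

theorem exists_mem_Icc_norm_joukowski_sub_le {ϱ : ℝ} {w : ℂ} (hϱ : 0 < ϱ) (h₁ : ϱ⁻¹ ≤ ‖w‖)
    (h₂ : ‖w‖ ≤ ϱ) : ∃ t ∈ Icc (-1 : ℝ) 1, ‖joukowski w - t‖ ≤ (ϱ - ϱ⁻¹) / 2 := by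
  set s := ‖w‖
  have hs : 0 < s := (inv_pos.2 hϱ).trans_le h₁
  set e := w / s with he_def
  have he : ‖e‖ = 1 := by
    rw [he_def, norm_div, norm_real, Real.norm_of_nonneg hs.le, div_self hs.ne']
  have hw : w = s * e := by rw [he_def, mul_div_cancel₀ _ (by exact_mod_cast hs.ne')]
  have hwinv : w⁻¹ = s⁻¹ * conj e := by
    rw [hw, mul_inv, Complex.inv_def e, normSq_eq_norm_sq, he]; push_cast; ring
  refine ⟨e.re, abs_le.1 (he ▸ abs_re_le_norm e), ?_⟩
  have hsum : |s - 1| + |s⁻¹ - 1| ≤ ϱ - ϱ⁻¹ := by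
    have h₃ : ϱ⁻¹ ≤ s⁻¹ := inv_anti₀ hs h₂
    have h₄ : s⁻¹ ≤ ϱ := inv_le_of_inv_le₀ hϱ h₁
    rcases le_total 1 s with h | h
    · rw [abs_of_nonneg (by linarith), abs_of_nonpos (by linarith [inv_le_one_of_one_le₀ h])]
      linarith
    · rw [abs_of_nonpos (by linarith), abs_of_nonneg (by linarith [one_le_inv₀ hs |>.2 h])]
      linarith
  calc ‖joukowski w - e.re‖ = ‖((s - 1 : ℝ) * e + (s⁻¹ - 1 : ℝ) * conj e) / 2‖ := by
        rw [joukowski, re_eq_add_conj, hwinv]; nth_rewrite 1 [hw]; push_cast; ring_nf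
    _ ≤ (|s - 1| + |s⁻¹ - 1|) / 2 := by
        rw [norm_div, RCLike.norm_ofNat]
        gcongr
        refine (norm_add_le _ _).trans_eq ?_
        simp only [norm_mul, he, Complex.norm_conj, mul_one, norm_real, Real.norm_eq_abs]
    _ ≤ (ϱ - ϱ⁻¹) / 2 := by gcongr

end Joukowski

theorem inv_add_sqrt_one_add_sq (ε : ℝ) : (ε + √(1 + ε ^ 2))⁻¹ = √(1 + ε ^ 2) - ε :=
  inv_eq_of_mul_eq_one_right (by linear_combination Real.sq_sqrt (by positivity : 0 ≤ 1 + ε ^ 2))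

theorem add_sqrt_one_add_sq_pos (ε : ℝ) : 0 < ε + √(1 + ε ^ 2) := by
  have : -ε < √(1 + ε ^ 2) := Real.lt_sqrt_of_sq_lt (by nlinarith)
  linarith

theorem one_lt_add_sqrt_one_add_sq {ε : ℝ} (hε : 0 < ε) : 1 < ε + √(1 + ε ^ 2) := by
  have : 1 ≤ √(1 + ε ^ 2) := Real.one_le_sqrt.2 (by nlinarith)
  linarith

theorem inv_sub_eq_geom_sum_add {K : Type*} [Field K] {a b : K} (ha : a ≠ 0) (hab : a ≠ b) (q : ℕ) :
    (a - b)⁻¹ = ∑ k ∈ range q, b ^ k * a⁻¹ ^ (k + 1) + (b / a) ^ q * (a - b)⁻¹ := by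
  have hab' : a - b ≠ 0 := sub_ne_zero.2 hab
  induction q with
  | zero => simp
  | succ q ih =>
    conv_lhs => rw [ih]
    rw [sum_range_succ, add_assoc]
    congr 1
    simp only [div_pow, inv_pow]
    field_simp
    ring

theorem norm_inv_sub_sub_geom_sum_le {𝕜 : Type*} [NormedField 𝕜] {a b : 𝕜} (h : ‖b‖ < ‖a‖) (q : ℕ) :
    ‖(a - b)⁻¹ - ∑ k ∈ range q, b ^ k * a⁻¹ ^ (k + 1)‖ ≤ (‖b‖ / ‖a‖) ^ q * (‖a‖ - ‖b‖)⁻¹ := by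
  have ha : a ≠ 0 := norm_pos_iff.1 ((norm_nonneg b).trans_lt h)
  have hab : a ≠ b := by rintro rfl; exact h.false
  rw [inv_sub_eq_geom_sum_add ha hab q, add_sub_cancel_left, norm_mul, norm_pow, norm_div, norm_inv]
  gcongr
  exact norm_sub_norm_le a b

theorem sphere_subset_closedBall_diff_ball {X : Type*} [PseudoMetricSpace X] {c : X} {r ρ R : ℝ}
    (hr : r ≤ ρ) (hR : ρ ≤ R) : sphere c ρ ⊆ closedBall c R \ ball c r := fun _ hz =>
  ⟨closedBall_subset_closedBall hR (sphere_subset_closedBall hz),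
    fun h => (mem_ball.1 h).not_ge (hr.trans_eq (mem_sphere.1 hz).symm)⟩

section CircleIntegral

variable {E : Type*} [NormedAddCommGroup E] [NormedSpace ℂ E]

theorem norm_circleIntegral_smul_sub_sum_le {f : ℂ → E} {K : ℂ → ℂ} {g : ℕ → ℂ → ℂ} {a : ℕ → ℂ}
    {c : ℂ} {ρ δ M : ℝ} {q : ℕ} (hρ : 0 ≤ ρ) (hf : ContinuousOn f (sphere c ρ))
    (hK : ContinuousOn K (sphere c ρ)) (hg : ∀ k, ContinuousOn (g k) (sphere c ρ))
    (hKg : ∀ z ∈ sphere c ρ, ‖K z - ∑ k ∈ range q, a k * g k z‖ ≤ δ)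
    (hM : ∀ z ∈ sphere c ρ, ‖f z‖ ≤ M) :
    ‖(∮ z in C(c, ρ), K z • f z) - ∑ k ∈ range q, a k • ∮ z in C(c, ρ), g k z • f z‖ ≤
      2 * π * ρ * (δ * M) := by
  have hterm : ∀ k, ContinuousOn (fun z => (a k * g k z) • f z) (sphere c ρ) := fun k =>
    (continuousOn_const.mul (hg k)).smul hf
  have hsum : ∑ k ∈ range q, a k • ∮ z in C(c, ρ), g k z • f z =
      ∮ z in C(c, ρ), ∑ k ∈ range q, (a k * g k z) • f z := by
    rw [circleIntegral.integral_fun_sum (f := fun k z => (a k * g k z) • f z)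
      fun k _ => (hterm k).circleIntegrable hρ]
    simp only [mul_smul, circleIntegral.integral_smul]
  rw [hsum, ← circleIntegral.integral_sub (f := fun z => K z • f z)
    (g := fun z => ∑ k ∈ range q, (a k * g k z) • f z) ((hK.smul hf).circleIntegrable hρ)
    ((continuousOn_finsetSum _ fun k _ => hterm k).circleIntegrable hρ)]
  refine circleIntegral.norm_integral_le_of_norm_le_const hρ fun z hz => ?_
  rw [← sum_smul, ← sub_smul, norm_smul]
  exact mul_le_mul (hKg z hz) (hM z hz) (norm_nonneg _) ((norm_nonneg _).trans (hKg z hz))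

theorem continuousOn_sub_inv_sphere {u : ℂ} {c : ℂ} {ρ : ℝ} (hu : ‖u - c‖ ≠ ρ) :
    ContinuousOn (fun z => (z - u)⁻¹) (sphere c ρ) :=
  ContinuousOn.inv₀ (f := fun z => z - u) (by fun_prop) fun z hz h => hu (by
    rwa [← sub_eq_zero.1 h, ← mem_sphere_iff_norm])

theorem norm_circleIntegral_sub_inv_smul_sub_sum_le_of_lt {f : ℂ → E} {R M : ℝ} {u : ℂ}
    (hf : ContinuousOn f (sphere 0 R)) (hM : ∀ z ∈ sphere (0 : ℂ) R, ‖f z‖ ≤ M) (hu : ‖u‖ < R)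
    (q : ℕ) :
    ‖(∮ z in C(0, R), (z - u)⁻¹ • f z) -
        ∑ k ∈ range q, u ^ k • ∮ z in C(0, R), z⁻¹ ^ (k + 1) • f z‖ ≤
      2 * π * R * ((‖u‖ / R) ^ q * (R - ‖u‖)⁻¹ * M) := by
  have hR : 0 < R := (norm_nonneg u).trans_lt hu
  have hz : ∀ z ∈ sphere (0 : ℂ) R, ‖z‖ = R := fun z hz => by simpa using hz
  refine norm_circleIntegral_smul_sub_sum_le hR.le hf
    (continuousOn_sub_inv_sphere (by simpa using hu.ne)) (fun k => ?_) (fun z hz' => ?_) hM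
  · exact (continuousOn_id.inv₀ fun z hz' h =>
      hR.ne' (by rw [← hz z hz', show z = 0 from h, norm_zero])).pow _
  · have := norm_inv_sub_sub_geom_sum_le (a := z) (b := u) (by rwa [hz z hz']) q
    rwa [hz z hz'] at this

theorem norm_circleIntegral_sub_inv_smul_add_sum_le_of_lt {f : ℂ → E} {r M : ℝ} {u : ℂ}
    (hr : 0 ≤ r) (hf : ContinuousOn f (sphere 0 r)) (hM : ∀ z ∈ sphere (0 : ℂ) r, ‖f z‖ ≤ M)
    (hu : r < ‖u‖) (q : ℕ) :
    ‖(∮ z in C(0, r), (z - u)⁻¹ • f z) +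
        ∑ k ∈ range q, u⁻¹ ^ (k + 1) • ∮ z in C(0, r), z ^ k • f z‖ ≤
      2 * π * r * ((r / ‖u‖) ^ q * (‖u‖ - r)⁻¹ * M) := by
  have hz : ∀ z ∈ sphere (0 : ℂ) r, ‖z‖ = r := fun z hz => by simpa using hz
  have := norm_circleIntegral_smul_sub_sum_le (K := fun z => (z - u)⁻¹)
    (a := fun k => -u⁻¹ ^ (k + 1)) (g := fun k z => z ^ k) (q := q)
    (δ := (r / ‖u‖) ^ q * (‖u‖ - r)⁻¹) hr hf (continuousOn_sub_inv_sphere (by simpa using hu.ne'))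
    (fun k => by fun_prop) (fun z hz' => ?_) hM
  · simpa only [neg_smul, sum_neg_distrib, sub_neg_eq_add] using this
  · have := norm_inv_sub_sub_geom_sum_le (a := u) (b := z) (by rwa [hz z hz']) q
    rw [hz z hz'] at this
    rw [← neg_sub u z, inv_neg]
    simp only [neg_mul, sum_neg_distrib, sub_neg_eq_add, mul_comm (u⁻¹ ^ _)]
    rwa [neg_add_eq_sub, norm_sub_rev]

noncomputable def laurentSum (a b : ℕ → E) (m n : ℕ) (u : ℂ) : E :=
  ∑ k ∈ range m, u ^ k • a k + ∑ k ∈ range n, u⁻¹ ^ (k + 1) • b k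

variable [CompleteSpace E]

theorem circleIntegral_sub_inv_smul_sub_of_mem_annulus {f : ℂ → E} {V : Set ℂ} (hV : IsOpen V)
    (hf : DifferentiableOn ℂ f V) {r R : ℝ} (hr : 0 < r) (hA : closedBall (0 : ℂ) R \ ball 0 r ⊆ V)
    {u : ℂ} (hru : r < ‖u‖) (huR : ‖u‖ < R) :
    (∮ z in C(0, R), (z - u)⁻¹ • f z) - (∮ z in C(0, r), (z - u)⁻¹ • f z) = (2 * π * I) • f u := by
  have hrR : r ≤ R := (hru.trans huR).le
  have hu : u ∈ V := hA (sphere_subset_closedBall_diff_ball hru.le huR.le (by simp))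
  -- Cauchy–Goursat for the holomorphic `dslope f u` reduces everything to `∮ (z - u)⁻¹`.
  have hg : DifferentiableOn ℂ (dslope f u) V :=
    (differentiableOn_dslope (hV.mem_nhds hu)).2 hf
  have hdslope : ∀ ρ, r ≤ ρ → ρ ≤ R → ‖u‖ ≠ ρ → (∮ z in C(0, ρ), dslope f u z) =
      (∮ z in C(0, ρ), (z - u)⁻¹ • f z) - (∮ z in C(0, ρ), (z - u)⁻¹) • f u := by
    intro ρ h₁ h₂ hρ
    have hK := continuousOn_sub_inv_sphere (c := 0) (by simpa using hρ)
    have hfρ := hf.continuousOn.mono ((sphere_subset_closedBall_diff_ball h₁ h₂).trans hA)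
    rw [← circleIntegral.integral_smul_const, ← circleIntegral.integral_sub
      (f := fun z => (z - u)⁻¹ • f z) (g := fun z => (z - u)⁻¹ • f u)
      ((hK.smul hfρ).circleIntegrable (hr.le.trans h₁))
      ((hK.smul continuousOn_const).circleIntegrable (hr.le.trans h₁))]
    refine circleIntegral.integral_congr (hr.le.trans h₁) fun z hz => ?_
    have hzu : z ≠ u := by rintro rfl; exact hρ (by simpa using hz)
    simp only [dslope_of_ne f hzu, slope_def_module, smul_sub]
  have hann : (∮ z in C(0, R), dslope f u z) = ∮ z in C(0, r), dslope f u z :=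
    circleIntegral_eq_of_differentiable_on_annulus_off_countable hr hrR countable_empty
      (hg.continuousOn.mono hA) fun _ hz => hg.differentiableAt (hV.mem_nhds
        (hA ⟨ball_subset_closedBall hz.1.1, fun h => hz.1.2 (ball_subset_closedBall h)⟩))
  have hR : (∮ z in C(0, R), (z - u)⁻¹) = 2 * π * I :=
    circleIntegral.integral_sub_inv_of_mem_ball (by simpa using huR)
  have hr' : (∮ z in C(0, r), (z - u)⁻¹) = 0 := by
    refine DiffContOnCl.circleIntegral_eq_zero hr.le
      (DifferentiableOn.diffContOnCl_ball (U := closedBall 0 r) ?_ subset_rfl)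
    refine (differentiableOn_id.sub_const u).inv fun z hz h => ?_
    rw [mem_closedBall_zero_iff, show z = u from sub_eq_zero.1 h] at hz
    exact hz.not_gt hru
  rw [hdslope R hrR le_rfl huR.ne, hdslope r le_rfl hrR hru.ne', hR, hr', zero_smul, sub_zero]
    at hann
  rw [← hann]
  abel

theorem norm_sub_laurentSum_le {f : ℂ → E} {V : Set ℂ} (hV : IsOpen V)
    (hf : DifferentiableOn ℂ f V) {r R M : ℝ} (hr : 0 < r)
    (hA : closedBall (0 : ℂ) R \ ball 0 r ⊆ V)
    (hM : ∀ z ∈ closedBall (0 : ℂ) R \ ball 0 r, ‖f z‖ ≤ M)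
    {u : ℂ} (hru : r < ‖u‖) (huR : ‖u‖ < R) (m n : ℕ) :
    ‖f u - laurentSum (fun k => (2 * π * I)⁻¹ • ∮ z in C(0, R), z⁻¹ ^ (k + 1) • f z)
        (fun k => (2 * π * I)⁻¹ • ∮ z in C(0, r), z ^ k • f z) m n u‖ ≤
      R * ((‖u‖ / R) ^ m * (R - ‖u‖)⁻¹ * M) + r * ((r / ‖u‖) ^ n * (‖u‖ - r)⁻¹ * M) := by
  have hrR : r ≤ R := (hru.trans huR).le
  have hR := sphere_subset_closedBall_diff_ball (c := (0 : ℂ)) hrR le_rfl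
  have hr' := sphere_subset_closedBall_diff_ball (c := (0 : ℂ)) le_rfl hrR
  have hout := norm_circleIntegral_sub_inv_smul_sub_sum_le_of_lt
    (hf.continuousOn.mono (hR.trans hA)) (fun z hz => hM z (hR hz)) huR m
  have hin := norm_circleIntegral_sub_inv_smul_add_sum_le_of_lt hr.le
    (hf.continuousOn.mono (hr'.trans hA)) (fun z hz => hM z (hr' hz)) hru n
  have hfu : f u = (2 * π * I)⁻¹ •
      ((∮ z in C(0, R), (z - u)⁻¹ • f z) - (∮ z in C(0, r), (z - u)⁻¹ • f z)) := by
    rw [circleIntegral_sub_inv_smul_sub_of_mem_annulus hV hf hr hA hru huR,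
      inv_smul_smul₀ two_pi_I_ne_zero]
  simp only [laurentSum, smul_comm _ (2 * π * I : ℂ)⁻¹, ← smul_sum, ← smul_add]
  rw [hfu, ← smul_sub, norm_smul, show ‖(2 * π * I : ℂ)⁻¹‖ = (2 * π)⁻¹ by simp [Real.pi_pos.le]]
  calc (2 * π)⁻¹ * ‖_‖
      ≤ (2 * π)⁻¹ * (2 * π * R * ((‖u‖ / R) ^ m * (R - ‖u‖)⁻¹ * M) +
          2 * π * r * ((r / ‖u‖) ^ n * (‖u‖ - r)⁻¹ * M)) := by
        gcongr
        rw [show ∀ a b c d : E, a - b - (c + d) = (a - c) - (b + d) from fun _ _ _ _ => by abel]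
        exact (norm_sub_le _ _).trans (add_le_add hout hin)
    _ = _ := by field_simp

theorem norm_sub_laurentSum_le_of_norm_eq_one {f : ℂ → E} {V : Set ℂ} (hV : IsOpen V)
    (hf : DifferentiableOn ℂ f V) {ϱ M : ℝ} (hϱ : 1 < ϱ)
    (hA : closedBall (0 : ℂ) ϱ \ ball 0 ϱ⁻¹ ⊆ V)
    (hM : ∀ z ∈ closedBall (0 : ℂ) ϱ \ ball 0 ϱ⁻¹, ‖f z‖ ≤ M) {u : ℂ} (hu : ‖u‖ = 1) (p : ℕ) :
    ‖f u - laurentSum (fun k => (2 * π * I)⁻¹ • ∮ z in C(0, ϱ), z⁻¹ ^ (k + 1) • f z)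
        (fun k => (2 * π * I)⁻¹ • ∮ z in C(0, ϱ⁻¹), z ^ k • f z) (p + 1) p u‖ ≤
      2 / (ϱ - 1) * ϱ ^ (-(p : ℤ)) * M := by
  refine (norm_sub_laurentSum_le hV hf (inv_pos.2 (zero_lt_one.trans hϱ)) hA hM
    (hu ▸ inv_lt_one_of_one_lt₀ hϱ) (hu ▸ hϱ) (p + 1) p).trans_eq ?_
  have h₁ : ϱ - 1 ≠ 0 := sub_ne_zero.2 hϱ.ne'
  have h₂ : 1 - ϱ⁻¹ = (ϱ - 1) / ϱ := by field_simp
  rw [hu, zpow_neg, zpow_natCast, h₂]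
  simp only [one_div, inv_pow, div_one]
  field_simp
  ring

end CircleIntegral

section Bernstein

variable {E : Type*} [NormedAddCommGroup E] [NormedSpace ℂ E]

noncomputable def chebyshevSum (a b : ℕ → E) (m n : ℕ) (t : ℂ) : E :=
  ∑ k ∈ range m, (Chebyshev.T ℂ k).eval t • a k +
    ∑ k ∈ range n, (Chebyshev.T ℂ (k + 1 : ℕ)).eval t • b k

theorem chebyshevSum_mem_polynomialMapsLE (a b : ℕ → E) (p : ℕ) :
    chebyshevSum a b (p + 1) p ∈ polynomialMapsLE ℂ E p := by
  refine add_mem (sum_eval_smul_mem_polynomialMapsLE (fun k hk => ?_) a)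
    (sum_eval_smul_mem_polynomialMapsLE (fun k hk => ?_) b) <;>
  · rw [Chebyshev.natDegree_T, Int.natAbs_natCast]
    simp only [Finset.mem_range] at hk
    omega

theorem laurentSum_add_laurentSum_inv {u : ℂ} (hu : u ≠ 0) (a b : ℕ → E) (m n : ℕ) :
    laurentSum a b m n u + laurentSum a b m n u⁻¹ =
      (2 : ℂ) • chebyshevSum a b m n (joukowski u) := by
  have hT : ∀ k : ℕ, 2 * (Chebyshev.T ℂ k).eval (joukowski u) = u ^ k + u⁻¹ ^ k :=
    Chebyshev.two_mul_T_eval_half_add (mul_inv_cancel₀ hu)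
  simp only [laurentSum, chebyshevSum, inv_inv, smul_add, smul_sum, smul_smul, hT, add_smul,
    sum_add_distrib]
  abel

/-- The closed region bounded by the Bernstein ellipse with foci `±1` and semi-axis sum `ϱ`. -/
def bernsteinEllipse (ϱ : ℝ) : Set ℂ := joukowski '' (closedBall 0 ϱ \ ball 0 ϱ⁻¹)

theorem exists_isOpen_differentiableOn_comp_joukowski {g : ℂ → E} {V : Set ℂ} {ϱ : ℝ}
    (hϱ : 0 < ϱ) (hV : IsOpen V) (hg : DifferentiableOn ℂ g V) (hEV : bernsteinEllipse ϱ ⊆ V) :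
    ∃ W, IsOpen W ∧ closedBall (0 : ℂ) ϱ \ ball 0 ϱ⁻¹ ⊆ W ∧
      DifferentiableOn ℂ (fun w => g (joukowski w)) W := by
  refine ⟨{w | w ≠ 0} ∩ joukowski ⁻¹' V,
    differentiableOn_joukowski.continuousOn.isOpen_inter_preimage isOpen_ne hV,
    fun w hw => ⟨?_, hEV (mem_image_of_mem _ hw)⟩,
    hg.comp (differentiableOn_joukowski.mono inter_subset_left) fun _ hw => hw.2⟩
  rintro rfl
  exact hw.2 (mem_ball_self (inv_pos.2 hϱ))

theorem exists_coeff_norm_sub_le_of_comp_affine {g q : ℂ → E} {p : ℕ}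
    (hq : q ∈ polynomialMapsLE ℂ E p) {c r C : ℝ} (hr : 0 < r)
    (hgq : ∀ t ∈ Icc (-1 : ℝ) 1, ‖g (c + r * t) - q t‖ ≤ C) :
    ∃ coef : ℕ → E, ∀ y ∈ Icc (c - r) (c + r),
      ‖g y - ∑ s ∈ range (p + 1), (y : ℂ) ^ s • coef s‖ ≤ C := by
  obtain ⟨coef, hcoef⟩ := comp_affine_mem_polynomialMapsLE hq (r⁻¹ : ℂ) (-c / r)
  refine ⟨coef, fun y hy => ?_⟩
  have hyt : (y - c) / r ∈ Icc (-1 : ℝ) 1 := by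
    rw [Set.mem_Icc, le_div_iff₀ hr, div_le_iff₀ hr]
    constructor <;> linarith [hy.1, hy.2]
  have hr' : (r : ℂ) ≠ 0 := ofReal_ne_zero.2 hr.ne'
  rw [← hcoef]
  convert hgq _ hyt using 4 <;> push_cast <;> field_simp <;> ring

variable [CompleteSpace E]

theorem exists_mem_polynomialMapsLE_norm_sub_le {g : ℂ → E} {V : Set ℂ} {ϱ M : ℝ} (hϱ : 1 < ϱ)
    (hV : IsOpen V) (hg : DifferentiableOn ℂ g V) (hEV : bernsteinEllipse ϱ ⊆ V)
    (hM : ∀ z ∈ bernsteinEllipse ϱ, ‖g z‖ ≤ M) (p : ℕ) :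
    ∃ q ∈ polynomialMapsLE ℂ E p, ∀ t ∈ Icc (-1 : ℝ) 1,
      ‖g t - q t‖ ≤ 2 / (ϱ - 1) * ϱ ^ (-(p : ℤ)) * M := by
  obtain ⟨W, hW, hAW, hF⟩ :=
    exists_isOpen_differentiableOn_comp_joukowski (zero_lt_one.trans hϱ) hV hg hEV
  set a : ℕ → E := fun k => (2 * π * I)⁻¹ • ∮ z in C(0, ϱ), z⁻¹ ^ (k + 1) • g (joukowski z)
  set b : ℕ → E := fun k => (2 * π * I)⁻¹ • ∮ z in C(0, ϱ⁻¹), z ^ k • g (joukowski z)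
  have hL : ∀ w : ℂ, ‖w‖ = 1 → ‖g (joukowski w) - laurentSum a b (p + 1) p w‖ ≤
      2 / (ϱ - 1) * ϱ ^ (-(p : ℤ)) * M := fun w hw =>
    norm_sub_laurentSum_le_of_norm_eq_one hW hF hϱ hAW
      (fun z hz => hM _ (mem_image_of_mem _ hz)) hw p
  refine ⟨chebyshevSum a b (p + 1) p, chebyshevSum_mem_polynomialMapsLE a b p, fun t ht => ?_⟩
  obtain ⟨u, hu, hut⟩ := exists_norm_eq_one_joukowski_eq ht
  have hsym : laurentSum a b (p + 1) p u + laurentSum a b (p + 1) p u⁻¹ =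
      (2 : ℂ) • chebyshevSum a b (p + 1) p t :=
    hut ▸ laurentSum_add_laurentSum_inv (norm_ne_zero_iff.1 (hu ▸ one_ne_zero)) a b (p + 1) p
  calc ‖g t - chebyshevSum a b (p + 1) p t‖
      = ‖(2 : ℂ)⁻¹ • ((g (joukowski u) - laurentSum a b (p + 1) p u) +
          (g (joukowski u⁻¹) - laurentSum a b (p + 1) p u⁻¹))‖ := by
        rw [joukowski_inv, hut, show ∀ x y z : E, (x - y) + (x - z) = (2 : ℂ) • x - (y + z) from
          fun _ _ _ => by module, hsym, ← smul_sub, inv_smul_smul₀ two_ne_zero]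
    _ ≤ 2⁻¹ * (2 / (ϱ - 1) * ϱ ^ (-(p : ℤ)) * M + 2 / (ϱ - 1) * ϱ ^ (-(p : ℤ)) * M) := by
        rw [norm_smul, norm_inv, RCLike.norm_ofNat]
        gcongr
        exact (norm_add_le _ _).trans
          (add_le_add (hL u hu) (hL u⁻¹ (by rw [norm_inv, hu, inv_one])))
    _ = 2 / (ϱ - 1) * ϱ ^ (-(p : ℤ)) * M := by ring

end Bernstein

theorem infDist_add_mul_le_of_mem_bernsteinEllipse {c r ε : ℝ} (hr : 0 < r) {z : ℂ}
    (hz : z ∈ bernsteinEllipse (ε + √(1 + ε ^ 2))) :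
    infDist (c + r * z) ((fun t : ℝ => (t : ℂ)) '' Icc (c - r) (c + r)) ≤ r * ε := by
  obtain ⟨w, ⟨hw₁, hw₂⟩, rfl⟩ := hz
  obtain ⟨t, ht, hwt⟩ := exists_mem_Icc_norm_joukowski_sub_le (add_sqrt_one_add_sq_pos ε)
    (not_lt.1 fun h => hw₂ (mem_ball_zero_iff.2 h)) (mem_closedBall_zero_iff.1 hw₁)
  replace hwt : ‖joukowski w - t‖ ≤ ε := hwt.trans_eq (by rw [inv_add_sqrt_one_add_sq]; ring)
  calc infDist (c + r * joukowski w) _ ≤ dist (c + r * joukowski w) ((c + r * t : ℝ) : ℂ) :=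
        infDist_le_dist_of_mem (Set.mem_image_of_mem _
          (show c + r * t ∈ Icc (c - r) (c + r) from ⟨by nlinarith [ht.1], by nlinarith [ht.2]⟩))
    _ = r * ‖joukowski w - t‖ := by
        rw [dist_eq, show (c + r * joukowski w : ℂ) - ((c + r * t : ℝ) : ℂ) =
          (r : ℂ) * (joukowski w - t) by push_cast; ring, norm_mul, norm_real,
          Real.norm_of_nonneg hr.le]
    _ ≤ r * ε := by gcongr

theorem isCompact_setOf_infDist_le {X : Type*} [PseudoMetricSpace X] [ProperSpace X] {s : Set X}
    (hs : Bornology.IsBounded s) (hne : s.Nonempty) (δ : ℝ) :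
    IsCompact {x | infDist x s ≤ δ} :=
  isCompact_of_isClosed_isBounded (isClosed_le (continuous_infDist_pt s) continuous_const)
    ((hs.thickening (δ := δ + 1)).subset fun _ hx =>
      (mem_thickening_iff_infDist_lt hne).2 (lt_of_le_of_lt hx (lt_add_one δ)))

/-- Lemma 4.6 (Babuška et al.): given a compact interval `L = [a₀, b₀] ⊂ ℝ ⊂ ℂ` of
positive length, `d > 0`, the region `Ξ(L; d) = {z : dist(z, L) ≤ d}` and
`ϱ = 2d/|L| + √(1 + 4d²/|L|²) > 1`, any `B`-valued function `v` analytic on an open set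
containing `Ξ(L; d)` can be approximated on `L` by polynomials of degree `p` with
coefficients in `B` at the exponential rate `(2/(ϱ-1)) ϱ^{-p} max_{Ξ(L;d)} ‖v‖`. -/
theorem stmt8 {B : Type*} [NormedAddCommGroup B] [NormedSpace ℂ B] [CompleteSpace B]
    (a₀ b₀ : ℝ) (hab : a₀ < b₀) (d : ℝ) (hd : 0 < d)
    (L : Set ℂ) (hL : L = (fun t : ℝ => (t : ℂ)) '' Set.Icc a₀ b₀)
    (Ξ : Set ℂ) (hΞ : Ξ = {z : ℂ | Metric.infDist z L ≤ d})
    (ϱ : ℝ) (hϱ : ϱ = 2 * d / (b₀ - a₀) + Real.sqrt (1 + 4 * d ^ 2 / (b₀ - a₀) ^ 2))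
    (v : ℂ → B) (hv : ∃ U : Set ℂ, IsOpen U ∧ Ξ ⊆ U ∧ AnalyticOnNhd ℂ v U) :
    ∀ p : ℕ, ∃ coef : ℕ → B,
      ∀ y ∈ Set.Icc a₀ b₀,
        ‖v (y : ℂ) - ∑ s ∈ Finset.range (p + 1), ((y : ℂ) ^ s • coef s)‖ ≤
          (2 / (ϱ - 1)) * ϱ ^ (-(p : ℤ)) * sSup ((fun z => ‖v z‖) '' Ξ) := by
  intro p
  obtain ⟨U, hU, hΞU, hv⟩ := hv
  set r := (b₀ - a₀) / 2
  set c := (a₀ + b₀) / 2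
  set ε := 2 * d / (b₀ - a₀)
  have hr : 0 < r := by simp only [r]; linarith
  have hIcc : Icc a₀ b₀ = Icc (c - r) (c + r) := by simp only [c, r]; congr 1 <;> ring
  have hϱε : ϱ = ε + √(1 + ε ^ 2) := by rw [hϱ, div_pow, mul_pow]; norm_num
  have hE : ∀ z ∈ bernsteinEllipse ϱ, (c + r * z : ℂ) ∈ Ξ := fun z hz => by
    rw [hΞ, mem_ofPred_eq, hL, hIcc]
    refine (infDist_add_mul_le_of_mem_bernsteinEllipse hr (hϱε ▸ hz)).trans_eq ?_
    simp only [r, ε]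
    field_simp [sub_ne_zero.2 hab.ne']
  have hΞc : IsCompact Ξ := hΞ ▸ isCompact_setOf_infDist_le
    (hL ▸ (isCompact_Icc.image continuous_ofReal).isBounded)
    (hL ▸ (Set.nonempty_Icc.2 hab.le).image _) d
  obtain ⟨q, hq, hqv⟩ := exists_mem_polynomialMapsLE_norm_sub_le (g := fun z => v (c + r * z))
    (V := (fun z : ℂ => c + r * z) ⁻¹' U) (hϱε ▸ one_lt_add_sqrt_one_add_sq (by positivity))
    (hU.preimage (by fun_prop)) (hv.differentiableOn.comp (by fun_prop) (mapsTo_preimage _ _))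
    (fun z hz => hΞU (hE z hz)) (fun z hz => le_csSup
      (hΞc.bddAbove_image (hv.continuousOn.mono hΞU).norm) (mem_image_of_mem _ (hE z hz))) p
  rw [hIcc]
  exact exists_coeff_norm_sub_le_of_comp_affine hq hr hqv
end

section
/- Let B be a complex Banach space, let Γ = [a, b] ⊂ ℝ be a compact interval, and let γ > 0 and M ≥ 0. Suppose f : ℝ → B is infinitely differentiable and satisfies ‖f^{(r)}(y)‖ ≤ M · r! · (2γ)^r for every y ∈ Γ and every natural number r, where f^{(r)} denotes the r-th derivative. Then for every d with 0 < d < 1/(2γ) there exists a function F : ℂ → B that is complex-analytic on the open set Ξ := {z ∈ ℂ : dist(z, Γ) < d}, satisfies F(y) = f(y) for every y ∈ Γ, and satisfies ‖F(z)‖ ≤ M/(1 − 2dγ) for every z ∈ Ξ. -/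
open Set Metric Filter Topology

namespace Stmt9Aux

variable {B : Type*} [NormedAddCommGroup B] [NormedSpace ℂ B] [CompleteSpace B]

lemma idw_eq {f : ℝ → B} (hf : ContDiff ℝ (⊤ : ℕ∞) f) {s : Set ℝ} (hs : UniqueDiffOn ℝ s)
    {x : ℝ} (hx : x ∈ s) (n : ℕ) :
    iteratedDerivWithin n f s x = iteratedDeriv n f x := by
  rw [iteratedDerivWithin_eq_iteratedFDerivWithin, iteratedDeriv_eq_iteratedFDeriv]
  have h : HasFTaylorSeriesUpTo (⊤ : ℕ∞) f (ftaylorSeries ℝ f) :=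
    contDiff_iff_ftaylorSeries.mp (hf.of_le (by simp))
  congr 1
  exact ((h.hasFTaylorSeriesUpToOn s).eq_iteratedFDerivWithin_of_uniqueDiffOn (by exact_mod_cast le_top) hs hx).symm

end Stmt9Aux

namespace Stmt9Aux
set_option linter.unusedSectionVars false
variable {B : Type*} [NormedAddCommGroup B] [NormedSpace ℂ B] [CompleteSpace B]

lemma remainder_bound {f : ℝ → B} (hf : ContDiff ℝ (⊤ : ℕ∞) f) {c x M γ : ℝ} (hγ : 0 < γ)
    (hcx : c < x)
    (hb : ∀ t ∈ Icc c x, ∀ k : ℕ, ‖iteratedDeriv k f t‖ ≤ M * k.factorial * (2 * γ) ^ k)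
    (n : ℕ) :
    ‖f x - ∑ k ∈ Finset.range (n + 1),
        (((k.factorial : ℝ))⁻¹ * (x - c) ^ k) • iteratedDeriv k f c‖
      ≤ M * (n + 1) * (2 * γ * (x - c)) ^ (n + 1) := by
  have hud : UniqueDiffOn ℝ (Icc c x) := uniqueDiffOn_Icc hcx
  have hC : ∀ t ∈ Icc c x, ‖iteratedDerivWithin (n + 1) f (Icc c x) t‖
      ≤ M * (n + 1).factorial * (2 * γ) ^ (n + 1) := by
    intro t ht
    rw [idw_eq hf hud ht]
    exact hb t ht (n + 1)
  have h := taylor_mean_remainder_bound hcx.le ((hf.of_le (by exact_mod_cast le_top)).contDiffOn) (right_mem_Icc.mpr hcx.le) hC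
  rw [taylor_within_apply] at h
  have hsum : ∑ k ∈ Finset.range (n + 1), (((k.factorial : ℝ))⁻¹ * (x - c) ^ k) •
      iteratedDerivWithin k f (Icc c x) c
      = ∑ k ∈ Finset.range (n + 1), (((k.factorial : ℝ))⁻¹ * (x - c) ^ k) •
        iteratedDeriv k f c := by
    refine Finset.sum_congr rfl fun k _ => ?_
    rw [idw_eq hf hud (left_mem_Icc.mpr hcx.le)]
  rw [hsum] at h
  refine h.trans (le_of_eq ?_)
  have hfac : ((n.factorial : ℝ)) ≠ 0 := by positivity
  rw [Nat.factorial_succ, mul_pow (2 * γ) (x - c)]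
  push_cast
  field_simp

end Stmt9Aux

namespace Stmt9Aux
set_option linter.unusedSectionVars false
variable {B : Type*} [NormedAddCommGroup B] [NormedSpace ℂ B] [CompleteSpace B]

lemma hasSum_taylor {f : ℝ → B} (hf : ContDiff ℝ (⊤ : ℕ∞) f) {a b γ M : ℝ} (hγ : 0 < γ) (hM : 0 ≤ M)
    (hbound : ∀ y ∈ Icc a b, ∀ r : ℕ,
      ‖iteratedDeriv r f y‖ ≤ M * r.factorial * (2 * γ) ^ r)
    {y x : ℝ} (hy : y ∈ Icc a b) (hx : x ∈ Icc a b) (hq : 2 * γ * |x - y| < 1) :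
    HasSum (fun n : ℕ => (((n.factorial : ℝ))⁻¹ * (x - y) ^ n) • iteratedDeriv n f y) (f x) := by
  set q : ℝ := 2 * γ * |x - y| with hqdef
  have hq0 : 0 ≤ q := by positivity
  have hterm : ∀ n : ℕ, ‖(((n.factorial : ℝ))⁻¹ * (x - y) ^ n) • iteratedDeriv n f y‖
      ≤ M * q ^ n := by
    intro n
    have hfac : (0:ℝ) < n.factorial := by positivity
    rw [norm_smul, Real.norm_eq_abs, abs_mul, abs_inv, abs_pow, Nat.abs_cast]
    calc (n.factorial : ℝ)⁻¹ * |x - y| ^ n * ‖iteratedDeriv n f y‖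
        ≤ (n.factorial : ℝ)⁻¹ * |x - y| ^ n * (M * n.factorial * (2 * γ) ^ n) := by
          apply mul_le_mul_of_nonneg_left (hbound y hy n) (by positivity)
      _ = M * q ^ n := by
          rw [hqdef, mul_pow]
          field_simp
          ring
  have hsum : Summable (fun n : ℕ => (((n.factorial : ℝ))⁻¹ * (x - y) ^ n) •
      iteratedDeriv n f y) := by
    refine Summable.of_norm_bounded (Summable.mul_left M (summable_geometric_of_lt_one hq0 hq)) hterm
  rcases eq_or_ne x y with rfl | hxy
  · have h0 : ∀ n : ℕ, n ≠ 0 →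
        (((n.factorial : ℝ))⁻¹ * (x - x) ^ n) • iteratedDeriv n f x = 0 := by
      intro n hn
      simp [zero_pow hn]
    have := hasSum_single (f := fun n : ℕ =>
      (((n.factorial : ℝ))⁻¹ * (x - x) ^ n) • iteratedDeriv n f x) 0 h0
    simpa using this
  · rw [hsum.hasSum_iff_tendsto_nat]
    rw [tendsto_iff_norm_sub_tendsto_zero]
    have hbnd : Tendsto (fun N : ℕ => M * ((N : ℝ) ^ 1 * q ^ N)) atTop (𝓝 (M * 0)) :=
      (tendsto_pow_const_mul_const_pow_of_lt_one 1 hq0 hq).const_mul M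
    rw [mul_zero] at hbnd
    refine squeeze_zero_norm' ?_ hbnd
    filter_upwards [eventually_ge_atTop 1] with N hN
    obtain ⟨n, rfl⟩ : ∃ n, N = n + 1 := ⟨N - 1, by omega⟩
    rw [norm_norm]
    have key : ‖f x - ∑ k ∈ Finset.range (n + 1),
        (((k.factorial : ℝ))⁻¹ * (x - y) ^ k) • iteratedDeriv k f y‖
        ≤ M * (n + 1) * q ^ (n + 1) := by
      rcases hxy.lt_or_gt with hlt | hlt
      · -- x < y : reflection
        set g : ℝ → B := fun t => f (x + y - t) with hgdef
        have hg : ContDiff ℝ (⊤ : ℕ∞) g := by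
          apply hf.comp
          exact (contDiff_const.sub contDiff_id)
        have hgk : ∀ (k : ℕ) (t : ℝ),
            iteratedDeriv k g t = ((-1 : ℝ)) ^ k • iteratedDeriv k f (x + y - t) := by
          intro k t
          have e1 : g = fun t => (fun s => f ((x + y) + s)) (-t) := by
            funext u; simp [hgdef, sub_eq_add_neg]
          rw [e1, iteratedDeriv_comp_neg k (fun s => f ((x + y) + s)) t,
            iteratedDeriv_comp_const_add k f (x + y)]
          norm_num [sub_eq_add_neg]
        have hb' : ∀ t ∈ Icc x y, ∀ k : ℕ,
            ‖iteratedDeriv k g t‖ ≤ M * k.factorial * (2 * γ) ^ k := by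
          intro t ht k
          rw [hgk k t, norm_smul]
          have : x + y - t ∈ Icc a b := by
            constructor
            · have := ht.2; have := hx.1; simp at *; linarith
            · have := ht.1; have := hy.2; simp at *; linarith
          simpa using hbound _ this k
        have h := remainder_bound hg hγ hlt hb' n
        have e2 : g y = f x := by simp [hgdef]
        have e3 : ∀ k ∈ Finset.range (n + 1),
            (((k.factorial : ℝ))⁻¹ * (y - x) ^ k) • iteratedDeriv k g x
            = (((k.factorial : ℝ))⁻¹ * (x - y) ^ k) • iteratedDeriv k f y := by
          intro k _
          rw [hgk k x]
          have : x + y - x = y := by ring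
          rw [this, smul_smul]
          congr 1
          have e5 : (x - y) ^ k = (-1 : ℝ) ^ k * (y - x) ^ k := by
            rw [← neg_sub y x, neg_pow]
          rw [e5]; ring
        rw [e2, Finset.sum_congr rfl e3] at h
        have e4 : 2 * γ * (y - x) = q := by
          rw [hqdef, abs_of_neg (by linarith)]; ring
        rw [e4] at h
        exact h
      · -- y < x
        have hb' : ∀ t ∈ Icc y x, ∀ k : ℕ,
            ‖iteratedDeriv k f t‖ ≤ M * k.factorial * (2 * γ) ^ k := by
          intro t ht k
          exact hbound t (⟨le_trans hy.1 ht.1, le_trans ht.2 hx.2⟩) k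
        have h := remainder_bound hf hγ hlt hb' n
        have e4 : 2 * γ * (x - y) = q := by
          rw [hqdef, abs_of_pos (by linarith)]
        rw [e4] at h
        exact h
    rw [norm_sub_rev]
    calc ‖f x - ∑ k ∈ Finset.range (n + 1),
        (((k.factorial : ℝ))⁻¹ * (x - y) ^ k) • iteratedDeriv k f y‖
        ≤ M * (n + 1) * q ^ (n + 1) := key
      _ = M * (((n + 1 : ℕ) : ℝ) ^ 1 * q ^ (n + 1)) := by push_cast; ring

end Stmt9Aux

namespace Stmt9Aux
set_option linter.unusedSectionVars false
variable {B : Type*} [NormedAddCommGroup B] [NormedSpace ℂ B] [CompleteSpace B]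

/-- The complex power series of `f` centered at `y`. -/
noncomputable def pser (f : ℝ → B) (y : ℝ) : FormalMultilinearSeries ℂ ℂ B := fun n =>
  ContinuousMultilinearMap.mkPiRing ℂ (Fin n)
    (((n.factorial : ℝ))⁻¹ • iteratedDeriv n f y)

/-- The local complex extension of `f` around `y`. -/
noncomputable def gfun (f : ℝ → B) (y : ℝ) (z : ℂ) : B := (pser f y).sum (z - (y : ℂ))

lemma norm_pser (f : ℝ → B) (y : ℝ) (n : ℕ) :
    ‖pser f y n‖ = ((n.factorial : ℝ))⁻¹ * ‖iteratedDeriv n f y‖ := by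
  rw [pser, ContinuousMultilinearMap.norm_mkPiRing, norm_smul, Real.norm_eq_abs,
    abs_inv, Nat.abs_cast]

lemma gfun_eq (f : ℝ → B) (y : ℝ) (z : ℂ) :
    gfun f y z = ∑' n : ℕ, (z - (y : ℂ)) ^ n • (((n.factorial : ℝ))⁻¹ • iteratedDeriv n f y) := by
  rw [gfun, FormalMultilinearSeries.sum]
  congr 1
  funext n
  rw [pser, ContinuousMultilinearMap.mkPiRing_apply]
  simp

lemma radius_ge {f : ℝ → B} {γ M : ℝ} (hγ : 0 < γ) {y : ℝ}
    (hb : ∀ n : ℕ, ‖iteratedDeriv n f y‖ ≤ M * n.factorial * (2 * γ) ^ n) :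
    ENNReal.ofReal (1 / (2 * γ)) ≤ (pser f y).radius := by
  have h2γ : (0:ℝ) < 2 * γ := by linarith
  have key : ∀ n : ℕ, ‖pser f y n‖ * ((1 / (2 * γ) : ℝ)) ^ n ≤ M := by
    intro n
    have hfac : (0:ℝ) < n.factorial := by positivity
    rw [norm_pser]
    calc ((n.factorial : ℝ))⁻¹ * ‖iteratedDeriv n f y‖ * (1 / (2 * γ)) ^ n
        ≤ ((n.factorial : ℝ))⁻¹ * (M * n.factorial * (2 * γ) ^ n) * (1 / (2 * γ)) ^ n := by
          apply mul_le_mul_of_nonneg_right _ (by positivity)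
          exact mul_le_mul_of_nonneg_left (hb n) (by positivity)
      _ = M := by field_simp; rw [mul_assoc, ← mul_pow, mul_one_div_cancel (ne_of_gt h2γ), one_pow, mul_one]
  have := (pser f y).le_radius_of_bound M (r := Real.toNNReal (1 / (2 * γ)))
    (fun n => by
      rw [Real.coe_toNNReal _ (by positivity : (0:ℝ) ≤ 1 / (2 * γ))]
      exact key n)
  rwa [ENNReal.ofReal]

lemma hasFPS {f : ℝ → B} {γ M : ℝ} (hγ : 0 < γ) {y : ℝ}
    (hb : ∀ n : ℕ, ‖iteratedDeriv n f y‖ ≤ M * n.factorial * (2 * γ) ^ n) :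
    HasFPowerSeriesOnBall (gfun f y) (pser f y) (y : ℂ) (ENNReal.ofReal (1 / (2 * γ))) := by
  have hr := radius_ge hγ hb
  have hpos := ENNReal.ofReal_pos.mpr (show (0:ℝ) < 1 / (2 * γ) by positivity)
  refine ⟨hr, hpos, ?_⟩
  intro w hw
  have hw' : w ∈ EMetric.ball (0:ℂ) (pser f y).radius := lt_of_lt_of_le hw hr
  have := (pser f y).hasSum hw'
  simpa [gfun, add_sub_cancel_left] using this

end Stmt9Aux

namespace Stmt9Aux
set_option linter.unusedSectionVars false
variable {B : Type*} [NormedAddCommGroup B] [NormedSpace ℂ B] [CompleteSpace B]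

lemma gfun_real {f : ℝ → B} (hf : ContDiff ℝ (⊤ : ℕ∞) f) {a b γ M : ℝ} (hγ : 0 < γ) (hM : 0 ≤ M)
    (hbound : ∀ y ∈ Icc a b, ∀ r : ℕ,
      ‖iteratedDeriv r f y‖ ≤ M * r.factorial * (2 * γ) ^ r)
    {y x : ℝ} (hy : y ∈ Icc a b) (hx : x ∈ Icc a b) (hq : 2 * γ * |x - y| < 1) :
    gfun f y (x : ℂ) = f x := by
  rw [gfun_eq, ← (hasSum_taylor hf hγ hM hbound hy hx hq).tsum_eq]
  apply tsum_congr
  intro n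
  have e : ((x:ℂ) - (y:ℂ)) ^ n = (((x - y) ^ n : ℝ) : ℂ) := by push_cast; ring
  rw [e, Complex.coe_smul, smul_smul, mul_comm]

lemma dist_coe (u v : ℝ) : dist ((u:ℝ):ℂ) ((v:ℝ):ℂ) = |u - v| := by
  rw [dist_eq_norm, ← Complex.ofReal_sub, Complex.norm_real, Real.norm_eq_abs]

lemma consistency {f : ℝ → B} (hf : ContDiff ℝ (⊤ : ℕ∞) f) {a b γ M : ℝ} (hγ : 0 < γ) (hM : 0 ≤ M)
    (hbound : ∀ y ∈ Icc a b, ∀ r : ℕ,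
      ‖iteratedDeriv r f y‖ ≤ M * r.factorial * (2 * γ) ^ r)
    {ρ : ℝ} (hρ0 : 0 < ρ) (hρ : 2 * γ * ρ ≤ 1) {y y' : ℝ}
    (hy : y ∈ Icc a b) (hy' : y' ∈ Icc a b) {z : ℂ}
    (hz : z ∈ Metric.ball ((y:ℝ):ℂ) ρ ∩ Metric.ball ((y':ℝ):ℂ) ρ) :
    gfun f y z = gfun f y' z := by
  rcases eq_or_ne y y' with rfl | hne
  · rfl
  have h2γ : (0:ℝ) < 2 * γ := by linarith
  have hρ2 : ρ ≤ 1 / (2 * γ) := by rw [le_div_iff₀ h2γ]; linarith [mul_comm ρ (2*γ)]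
  have incl : ∀ u : ℝ, (Metric.ball ((u:ℝ):ℂ) ρ : Set ℂ)
      ⊆ EMetric.ball ((u:ℝ):ℂ) (ENNReal.ofReal (1 / (2 * γ))) := by
    intro u w hw
    rw [EMetric.ball, Metric.mem_eball, edist_dist]
    exact ENNReal.ofReal_lt_ofReal_iff (by positivity) |>.mpr
      (lt_of_lt_of_le (mem_ball.mp hw) hρ2)
  set U : Set ℂ := Metric.ball ((y:ℝ):ℂ) ρ ∩ Metric.ball ((y':ℝ):ℂ) ρ with hU
  have hana : AnalyticOnNhd ℂ (gfun f y) U :=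
    ((hasFPS hγ (fun n => hbound y hy n)).analyticOnNhd).mono
      (fun w hw => incl y (hw.1))
  have hana' : AnalyticOnNhd ℂ (gfun f y') U :=
    ((hasFPS hγ (fun n => hbound y' hy' n)).analyticOnNhd).mono
      (fun w hw => incl y' (hw.2))
  have hpre : IsPreconnected U :=
    ((convex_ball _ _).inter (convex_ball _ _)).isPreconnected
  -- the midpoint
  set m : ℝ := (y + y') / 2 with hm
  have hyy' : |y - y'| < 2 * ρ := by
    have h1 : dist ((y:ℝ):ℂ) ((y':ℝ):ℂ) ≤ dist ((y:ℝ):ℂ) z + dist z ((y':ℝ):ℂ) :=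
      dist_triangle _ _ _
    rw [dist_coe] at h1
    have h2 := mem_ball.mp hz.1
    have h3 := mem_ball.mp hz.2
    rw [dist_comm] at h2
    linarith
  have hma : a + |y - y'| / 2 ≤ m := by
    rcases abs_cases (y - y') with ⟨he, _⟩ | ⟨he, _⟩ <;>
      [(have := hy'.1); (have := hy.1)] <;> rw [hm] <;> linarith
  have hmb : m ≤ b - |y - y'| / 2 := by
    rcases abs_cases (y - y') with ⟨he, _⟩ | ⟨he, _⟩ <;>
      [(have := hy.2); (have := hy'.2)] <;> rw [hm] <;> linarith
  have hmy : |m - y| = |y - y'| / 2 := by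
    rw [hm, show (y + y') / 2 - y = (y' - y) / 2 by ring, abs_div, abs_sub_comm y' y]
    norm_num
  have hmy' : |m - y'| = |y - y'| / 2 := by
    rw [hm, show (y + y') / 2 - y' = (y - y') / 2 by ring, abs_div]
    norm_num
  have hmemU : ((m:ℝ):ℂ) ∈ U := by
    constructor <;> rw [mem_ball, dist_coe] <;> [rw [hmy]; rw [hmy']] <;> linarith
  -- the approximating sequence
  set w : ℕ → ℝ := fun k => m + (y - y') / (k + 2) with hw
  have h0 : Tendsto (fun k : ℕ => (y - y') / ((k:ℝ) + 2)) atTop (𝓝 0) := by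
    have h1 := tendsto_const_div_atTop_nhds_zero_nat (y - y')
    have h2 : Tendsto (fun k : ℕ => k + 2) atTop atTop := tendsto_add_atTop_nat 2
    have h3 := h1.comp h2
    have he : (fun k : ℕ => (y - y') / ((k:ℝ) + 2))
        = (fun n : ℕ => (y - y') / (n:ℝ)) ∘ (fun k : ℕ => k + 2) := by
      funext k
      simp only [Function.comp]
      push_cast
      ring
    rw [he]
    exact h3
  have htw : Tendsto w atTop (𝓝 m) := by
    have := tendsto_const_nhds (x := m) (f := atTop (α := ℕ)) |>.add h0
    simpa using this
  have hwne : ∀ k : ℕ, w k ≠ m := by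
    intro k
    simp only [hw, ne_eq, add_eq_left]
    exact div_ne_zero (sub_ne_zero.mpr hne) (by positivity)
  have htendp : Tendsto (fun k : ℕ => ((w k : ℝ) : ℂ)) atTop (𝓝[≠] ((m:ℝ):ℂ)) := by
    apply tendsto_nhdsWithin_of_tendsto_nhds_of_eventually_within
    · exact (Complex.continuous_ofReal.tendsto m).comp htw
    · filter_upwards with k
      simp only [mem_compl_iff, mem_singleton_iff]
      exact fun hc => hwne k (by exact_mod_cast hc)
  clear_value m w
  have hδ2 : 0 < 1 / (2 * γ) - |y - y'| / 2 := by
    have : |y - y'| / 2 < ρ := by linarith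
    linarith [lt_of_lt_of_le this hρ2]
  set δ : ℝ := min (|y - y'| / 2) (1 / (2 * γ) - |y - y'| / 2) with hδ
  have habsp : 0 < |y - y'| := abs_pos.mpr (sub_ne_zero.mpr hne)
  have hδ0 : 0 < δ := lt_min (by linarith) hδ2
  have hev : ∀ᶠ k in atTop, gfun f y ((w k : ℝ) : ℂ) = gfun f y' ((w k : ℝ) : ℂ) := by
    have hsmall : ∀ᶠ k in atTop, dist (w k) m < δ :=
      (Metric.tendsto_nhds.mp htw) δ hδ0
    filter_upwards [hsmall] with k hk
    rw [Real.dist_eq] at hk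
    have hk1 : |w k - m| < |y - y'| / 2 := lt_of_lt_of_le hk (min_le_left _ _)
    have hk2 : |w k - m| < 1 / (2 * γ) - |y - y'| / 2 :=
      lt_of_lt_of_le hk (min_le_right _ _)
    have habs1 := abs_le.mp hk1.le
    have hwIcc : w k ∈ Icc a b := by
      constructor <;> [linarith [habs1.1]; linarith [habs1.2]]
    have hqy : 2 * γ * |w k - y| < 1 := by
      have h4 : |w k - y| ≤ |w k - m| + |m - y| := abs_sub_le _ _ _
      rw [hmy] at h4
      have h5 : |w k - y| < 1 / (2 * γ) := by linarith
      calc 2 * γ * |w k - y| < 2 * γ * (1 / (2 * γ)) :=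
            mul_lt_mul_of_pos_left h5 h2γ
        _ = 1 := by field_simp
    have hqy' : 2 * γ * |w k - y'| < 1 := by
      have h4 : |w k - y'| ≤ |w k - m| + |m - y'| := abs_sub_le _ _ _
      rw [hmy'] at h4
      have h5 : |w k - y'| < 1 / (2 * γ) := by linarith
      calc 2 * γ * |w k - y'| < 2 * γ * (1 / (2 * γ)) :=
            mul_lt_mul_of_pos_left h5 h2γ
        _ = 1 := by field_simp
    rw [gfun_real hf hγ hM hbound hy hwIcc hqy,
      gfun_real hf hγ hM hbound hy' hwIcc hqy']
  have hfreq : ∃ᶠ z in 𝓝[≠] ((m:ℝ):ℂ), gfun f y z = gfun f y' z :=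
    htendp.frequently hev.frequently
  exact hana.eqOn_of_preconnected_of_frequently_eq hana' hpre hmemU hfreq hz

end Stmt9Aux

namespace Stmt9Aux

lemma norm_sub_coe (z : ℂ) (u : ℝ) :
    ‖z - (u:ℂ)‖ = Real.sqrt ((z.re - u) ^ 2 + z.im ^ 2) := by
  rw [Complex.norm_def, Complex.normSq_apply]
  simp only [Complex.sub_re, Complex.sub_im, Complex.ofReal_re, Complex.ofReal_im, sub_zero]
  congr 1
  ring

lemma clamp_abs {a b t : ℝ} (hab : a ≤ b) (ht : t ∈ Set.Icc a b) (r : ℝ) :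
    |r - max a (min b r)| ≤ |r - t| := by
  rcases le_total r b with hrb | hbr
  · rw [min_eq_right hrb]
    rcases le_total a r with har | hra
    · rw [max_eq_right har]
      simp [abs_nonneg]
    · rw [max_eq_left hra]
      have h1 : |r - a| = a - r := by rw [abs_of_nonpos (by linarith)]; ring
      have h2 : t - r ≤ |r - t| := by rw [abs_sub_comm]; exact le_abs_self _
      have := ht.1
      linarith
  · rw [min_eq_left hbr, max_eq_right hab]
    have h1 : |r - b| = r - b := abs_of_nonneg (by linarith)
    have h2 : r - t ≤ |r - t| := le_abs_self _
    have := ht.2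
    linarith

lemma norm_clamp_le {a b t : ℝ} (hab : a ≤ b) (ht : t ∈ Set.Icc a b) (z : ℂ) :
    ‖z - ((max a (min b z.re) : ℝ) : ℂ)‖ ≤ ‖z - (t:ℂ)‖ := by
  rw [norm_sub_coe, norm_sub_coe]
  apply Real.sqrt_le_sqrt
  apply add_le_add_left
  have h := clamp_abs hab ht z.re
  calc (z.re - max a (min b z.re)) ^ 2 = |z.re - max a (min b z.re)| ^ 2 := (sq_abs _).symm
    _ ≤ |z.re - t| ^ 2 := by apply pow_le_pow_left₀ (abs_nonneg _) h
    _ = (z.re - t) ^ 2 := sq_abs _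

end Stmt9Aux


open Stmt9Aux



/-- Abstract form of Lemma 4.5: a smooth `B`-valued function `f` on `ℝ` whose derivatives
satisfy `‖f⁽ʳ⁾(y)‖ ≤ M r! (2γ)^r` on the compact interval `Γ = [a, b]` extends, for every
`0 < d < 1/(2γ)`, to a function `F` analytic on the complex strip
`Ξ = {z : dist(z, Γ) < d}`, agreeing with `f` on `Γ`, and bounded there by `M/(1 - 2dγ)`. -/
theorem stmt9 {B : Type*} [NormedAddCommGroup B] [NormedSpace ℂ B] [CompleteSpace B]
    (a b γ M : ℝ) (hab : a ≤ b) (hγ : 0 < γ) (hM : 0 ≤ M)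
    (f : ℝ → B) (hf : ContDiff ℝ (⊤ : ℕ∞) f)
    (hbound : ∀ y ∈ Set.Icc a b, ∀ r : ℕ,
      ‖iteratedDeriv r f y‖ ≤ M * (Nat.factorial r) * (2 * γ) ^ r) :
    ∀ d : ℝ, 0 < d → d < 1 / (2 * γ) →
      ∃ F : ℂ → B,
        AnalyticOnNhd ℂ F
          {z : ℂ | Metric.infDist z ((fun t : ℝ => (t : ℂ)) '' Set.Icc a b) < d} ∧
        (∀ y ∈ Set.Icc a b, F (y : ℂ) = f y) ∧
        (∀ z ∈ {z : ℂ | Metric.infDist z ((fun t : ℝ => (t : ℂ)) '' Set.Icc a b) < d},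
          ‖F z‖ ≤ M / (1 - 2 * d * γ)) := by
  intro d hd0 hd
  have h2γ : (0:ℝ) < 2 * γ := by linarith
  set ρ : ℝ := (d + 1 / (2 * γ)) / 2 with hρdef
  have hdρ : d < ρ := by rw [hρdef]; linarith
  have hρlt : ρ < 1 / (2 * γ) := by rw [hρdef]; linarith
  have hρ0 : 0 < ρ := by linarith
  have hρle : 2 * γ * ρ ≤ 1 := by
    have := (lt_div_iff₀ h2γ).mp hρlt
    linarith
  set Γim : Set ℂ := (fun t : ℝ => (t : ℂ)) '' Set.Icc a b with hΓim
  set Ξ : Set ℂ := {z : ℂ | Metric.infDist z Γim < d} with hΞ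
  set c : ℂ → ℝ := fun z => max a (min b z.re) with hc
  have hcmem : ∀ z : ℂ, c z ∈ Set.Icc a b :=
    fun z => ⟨le_max_left _ _, max_le hab (min_le_left _ _)⟩
  have hΓne : Γim.Nonempty := ⟨(a:ℂ), ⟨a, Set.left_mem_Icc.mpr hab, rfl⟩⟩
  have hkey : ∀ z ∈ Ξ, ‖z - ((c z : ℝ):ℂ)‖ < d := by
    intro z hz
    obtain ⟨w, hw, hdist⟩ := (Metric.infDist_lt_iff hΓne).mp hz
    obtain ⟨t, ht, rfl⟩ := hw
    refine lt_of_le_of_lt ?_ (by rwa [dist_eq_norm] at hdist)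
    exact norm_clamp_le hab ht z
  have hopen : IsOpen Ξ := isOpen_lt (Metric.continuous_infDist_pt _) continuous_const
  refine ⟨fun z => gfun f (c z) z, ?_, ?_, ?_⟩
  · -- analyticity
    intro z₀ hz₀
    have hz₀d : ‖z₀ - ((c z₀ : ℝ):ℂ)‖ < d := hkey z₀ hz₀
    have hganly : AnalyticAt ℂ (gfun f (c z₀)) z₀ := by
      apply (hasFPS hγ (fun n => hbound (c z₀) (hcmem z₀) n)).analyticOnNhd
      rw [EMetric.mem_ball, edist_dist]
      apply (ENNReal.ofReal_lt_ofReal_iff (by positivity)).mpr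
      rw [dist_eq_norm]
      exact hz₀d.trans (hd.trans_le (le_refl _))
    have hev : (fun z => gfun f (c z) z) =ᶠ[𝓝 z₀] gfun f (c z₀) := by
      have hmem : Ξ ∩ Metric.ball z₀ (ρ - d) ∈ 𝓝 z₀ :=
        Filter.inter_mem (hopen.mem_nhds hz₀) (Metric.ball_mem_nhds _ (by linarith))
      filter_upwards [hmem] with z hz
      obtain ⟨hzΞ, hzb⟩ := hz
      apply consistency hf hγ hM hbound hρ0 hρle (hcmem z) (hcmem z₀)
      constructor
      · rw [Metric.mem_ball, dist_eq_norm]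
        exact (hkey z hzΞ).trans hdρ
      · rw [Metric.mem_ball]
        calc dist z ((c z₀ : ℝ):ℂ) ≤ dist z z₀ + dist z₀ ((c z₀ : ℝ):ℂ) := dist_triangle _ _ _
          _ < (ρ - d) + d := by
              apply add_lt_add (Metric.mem_ball.mp hzb)
              rw [dist_eq_norm]; exact hz₀d
          _ = ρ := by ring
    exact hganly.congr hev.symm
  · -- values on Γ
    intro x hx
    have hcx : c ((x:ℝ):ℂ) = x := by
      rw [hc]
      simp only [Complex.ofReal_re]
      rw [min_eq_right hx.2, max_eq_right hx.1]
    show gfun f (c ((x:ℝ):ℂ)) ((x:ℝ):ℂ) = f x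
    rw [hcx]
    apply gfun_real hf hγ hM hbound hx hx
    simp [h2γ]
  · -- bound
    intro z hz
    show ‖gfun f (c z) z‖ ≤ M / (1 - 2 * d * γ)
    have hzc : ‖z - ((c z : ℝ):ℂ)‖ < d := hkey z hz
    have hlt1 : 2 * γ * d < 1 := by
      have := (lt_div_iff₀ h2γ).mp hd
      linarith
    have h2γd : (0:ℝ) ≤ 2 * γ * d := by positivity
    have hterm : ∀ n : ℕ, ‖(z - ((c z : ℝ):ℂ)) ^ n •
        (((n.factorial : ℝ))⁻¹ • iteratedDeriv n f (c z))‖ ≤ M * (2 * γ * d) ^ n := by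
      intro n
      have hfac : (0:ℝ) < n.factorial := by positivity
      rw [norm_smul, norm_pow, norm_smul, Real.norm_eq_abs, abs_inv, Nat.abs_cast]
      calc ‖z - ((c z : ℝ):ℂ)‖ ^ n * ((n.factorial : ℝ)⁻¹ * ‖iteratedDeriv n f (c z)‖)
          ≤ d ^ n * ((n.factorial : ℝ)⁻¹ * (M * n.factorial * (2 * γ) ^ n)) := by
            apply mul_le_mul
            · exact pow_le_pow_left₀ (norm_nonneg _) hzc.le n
            · exact mul_le_mul_of_nonneg_left (hbound _ (hcmem z) n) (by positivity)
            · positivity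
            · positivity
        _ = M * (2 * γ * d) ^ n := by
            rw [mul_pow]
            field_simp
            ring
    have hgeo : Summable (fun n : ℕ => M * (2 * γ * d) ^ n) :=
      (summable_geometric_of_lt_one h2γd hlt1).mul_left M
    have hsummable : Summable (fun n : ℕ => ‖(z - ((c z : ℝ):ℂ)) ^ n •
        (((n.factorial : ℝ))⁻¹ • iteratedDeriv n f (c z))‖) :=
      Summable.of_nonneg_of_le (fun n => norm_nonneg _) hterm hgeo
    rw [gfun_eq]
    calc ‖∑' n : ℕ, (z - ((c z : ℝ):ℂ)) ^ n •
        (((n.factorial : ℝ))⁻¹ • iteratedDeriv n f (c z))‖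
        ≤ ∑' n : ℕ, ‖(z - ((c z : ℝ):ℂ)) ^ n •
          (((n.factorial : ℝ))⁻¹ • iteratedDeriv n f (c z))‖ :=
          norm_tsum_le_tsum_norm hsummable
      _ ≤ ∑' n : ℕ, M * (2 * γ * d) ^ n := Summable.tsum_le_tsum hterm hsummable hgeo
      _ = M * (1 - 2 * γ * d)⁻¹ := by
          rw [tsum_mul_left, tsum_geometric_of_lt_one h2γd hlt1]
      _ = M / (1 - 2 * d * γ) := by rw [div_eq_mul_inv]; ring_nf
end
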